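/- arXiv:1709.04187 — 7 statements merged into one kernel-verified Lean document; each statement's English description precedes it below -/
import Mathlib

section
/- Let (X,d) be a complete metric space and μ a finite Borel measure on X. Then μ(supp(μ)) = μ(X) if and only if μ is tight, where supp(μ) = {x ∈ X : μ(B(x,r)) > 0 for all r > 0}. -/
/-!
The support `S` is closed, so complete. It is also separable: for every `ε > 0` a maximal
`ε`-separated subset of `S` is an `ε`-net of `S`, and it is countable because the balls of radius
`ε / 2` around its points are disjoint and have positive measure. Hence `S` is a Polish
space, on which every finite measure is tight; if `S` has full measure, `μ` is the push-forward of
such a measure along the inclusion and is tight as well. Conversely, a tight measure gives no mass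
to the open set `Sᶜ`, since every compact subset of `Sᶜ` is covered by finitely many null balls.
-/

open MeasureTheory
open scoped ENNReal

namespace Metric

variable {X : Type*} [PseudoEMetricSpace X]

lemma exists_maximal_isSeparated (ε : ℝ≥0∞) (s : Set X) :
    ∃ N, Maximal (fun N ↦ N ⊆ s ∧ IsSeparated ε N) N :=
  zorn_subset _ fun c hc hchain ↦
    ⟨⋃₀ c, ⟨Set.sUnion_subset fun _ hN ↦ (hc hN).1,
      hchain.pairwise_sUnion.2 fun _ hN ↦ (hc hN).2⟩, fun _ ↦ Set.subset_sUnion_of_mem⟩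

lemma IsSeparated.countable_of_subset_support [MeasurableSpace X] [OpensMeasurableSpace X]
    {μ : Measure X} [SFinite μ] {ε : ℝ≥0∞} {N : Set X} (hε : ε ≠ 0)
    (hN : IsSeparated ε N) (hNμ : N ⊆ μ.support) : N.Countable := by
  have hdisj : Pairwise (Function.onFun Disjoint fun x : N ↦ eball (x : X) (ε / 2)) :=
    fun x y hxy ↦ eball_disjoint <| by
      rw [ENNReal.add_halves]
      exact (hN x.2 y.2 (Subtype.coe_ne_coe.2 hxy)).le
  have hpos : ∀ x : N, 0 < μ (eball (x : X) (ε / 2)) := fun x ↦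
    (Measure.mem_support_iff_forall _).1 (hNμ x.2) _ (eball_mem_nhds _ (ENNReal.half_pos hε))
  have hcount := Measure.countable_meas_pos_of_disjoint_iUnion (μ := μ)
    (fun x : N ↦ measurableSet_eball) hdisj
  simp only [hpos, Set.ofPred_true, Set.countable_univ_iff] at hcount
  exact Set.countable_coe_iff.1 hcount

end Metric

namespace MeasureTheory.Measure

variable {X : Type*} [MeasurableSpace X]

lemma support_eq_setOf_forall_ball_pos [PseudoMetricSpace X] (μ : Measure X) :
    μ.support = {x | ∀ r : ℝ, 0 < r → 0 < μ (Metric.ball x r)} := by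
  ext x
  exact Metric.nhds_basis_ball.mem_measureSupport

lemma isSeparable_support [PseudoEMetricSpace X] [OpensMeasurableSpace X] (μ : Measure X)
    [SFinite μ] : TopologicalSpace.IsSeparable μ.support := by
  obtain ⟨t, -, htc, ht⟩ :=
    EMetric.subset_countable_closure_of_almost_dense_set μ.support fun ε hε ↦ by
      obtain ⟨δ, hδ, hδε⟩ := ENNReal.lt_iff_exists_nnreal_btwn.1 hε
      obtain ⟨N, hN⟩ := Metric.exists_maximal_isSeparated (δ : ℝ≥0∞) μ.support
      refine ⟨N, hN.prop.2.countable_of_subset_support (mod_cast hδ.ne') hN.prop.1, ?_⟩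
      exact (Metric.isCover_iff_subset_iUnion_closedEBall.1
        (Metric.IsCover.of_maximal_isSeparated hN)).trans
        (Set.iUnion₂_mono fun _ _ ↦ Metric.closedEBall_subset_closedEBall hδε.le)
  exact ⟨t, htc, ht⟩

lemma innerRegular_of_isSeparable_of_ae_mem [PseudoEMetricSpace X] [CompleteSpace X]
    [BorelSpace X] (μ : Measure X) [IsFiniteMeasure μ] {s : Set X}
    (hs : TopologicalSpace.IsSeparable s) (hμs : ∀ᵐ x ∂μ, x ∈ s) : μ.InnerRegular := by
  let S := closure s
  have : CompleteSpace S := isClosed_closure.completeSpace_coe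
  have : TopologicalSpace.SeparableSpace S := hs.closure.separableSpace
  have : SecondCountableTopology S := UniformSpace.secondCountable_of_separable S
  have hmap : (μ.comap ((↑) : S → X)).map (↑) = μ := by
    rw [map_comap_subtype_coe isClosed_closure.measurableSet,
      restrict_eq_self_of_ae_mem (hμs.mono fun _ ↦ (subset_closure ·))]
  rw [← hmap]
  exact InnerRegular.map_of_continuous continuous_subtype_val

lemma innerRegular_iff_forall_exists_isCompact_lt_add [TopologicalSpace X] (μ : Measure X)
    [IsFiniteMeasure μ] :
    μ.InnerRegular ↔ ∀ A : Set X, MeasurableSet A → ∀ ε : ℝ≥0∞, 0 < ε →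
      ∃ K ⊆ A, IsCompact K ∧ μ A < μ K + ε := by
  refine ⟨fun _ A hA ε hε ↦ hA.exists_isCompact_lt_add (measure_ne_top μ A) hε.ne',
    fun h ↦ ⟨fun A hA r hr ↦ ?_⟩⟩
  obtain ⟨K, hKA, hK, hlt⟩ := h A hA (μ A - r) (tsub_pos_of_lt hr)
  refine ⟨K, hKA, hK, ?_⟩
  calc r = μ A - (μ A - r) := (ENNReal.sub_sub_cancel (measure_ne_top μ A) hr.le).symm
    _ < μ K := ENNReal.sub_lt_of_lt_add tsub_le_self hlt

end MeasureTheory.Measure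

/-- For a finite Borel measure `μ` on a complete metric space `X`, the support
`{x : X | ∀ r > 0, μ (ball x r) > 0}` has full measure `μ(X)` if and only if `μ` is tight
(inner regular): for every Borel set `A` and every `ε > 0` there is a compact `K ⊆ A`
with `μ A < μ K + ε`. -/
theorem support_full_measure_iff_tight {X : Type*} [MetricSpace X] [CompleteSpace X]
    [MeasurableSpace X] [BorelSpace X] (μ : Measure X) [IsFiniteMeasure μ] :
    μ {x : X | ∀ r : ℝ, 0 < r → 0 < μ (Metric.ball x r)} = μ Set.univ ↔
      ∀ A : Set X, MeasurableSet A → ∀ ε : ℝ≥0∞, 0 < ε →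
        ∃ K ⊆ A, IsCompact K ∧ μ A < μ K + ε := by
  rw [← Measure.support_eq_setOf_forall_ball_pos,
    ← ae_mem_iff_measure_eq Measure.isClosed_support.measurableSet.nullMeasurableSet,
    ← Measure.innerRegular_iff_forall_exists_isCompact_lt_add]
  exact ⟨Measure.innerRegular_of_isSeparable_of_ae_mem μ (Measure.isSeparable_support μ),
    fun _ ↦ Measure.support_mem_ae_of_innerRegular⟩
end

section
/- Let X be a metric space equipped with a closed partial order and let μ, ν be tight Borel probability measures on X. Then the following are equivalent: (1) μ(U) ≤ ν(U) for every open upper set U ⊆ X; (2) μ(A) ≤ ν(A) for every closed upper set A ⊆ X; (3) μ(B) ≤ ν(B) for every Borel upper set B ⊆ X. -/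
open MeasureTheory
open scoped ENNReal

/-- A Borel measure on a metric space is tight (inner regular) if every Borel set can be
approximated in measure from inside by compact subsets. -/
def MeasureIsTight {X : Type*} [TopologicalSpace X] [MeasurableSpace X]
    (μ : Measure X) : Prop :=
  ∀ A : Set X, MeasurableSet A → ∀ ε : ℝ≥0∞, 0 < ε → ∃ K ⊆ A, IsCompact K ∧ μ A < μ K + ε

/-! For a closed order, the upper and lower closures of a compact set `K` are closed: they are
projections of closed subsets of `X × K`, and projecting along a compact factor is a closed map.
Tightness of `μ` approximates a Borel upper set `B` from inside by a compact `K`, hence by the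
closed upper set `↑K ⊆ B`. Tightness of `ν` approximates the complement of a closed upper set `A`
from inside by a compact `K`; then `(↓K)ᶜ` is an open upper set containing `A` whose `ν`-measure
exceeds `ν A` by at most `ε`. -/

section Topology

variable {X : Type*} [TopologicalSpace X] [Preorder X] [OrderClosedTopology X] {K : Set X}

theorem IsCompact.isClosed_upperClosure (hK : IsCompact K) :
    IsClosed (upperClosure K : Set X) := by
  have : CompactSpace K := isCompact_iff_compactSpace.mp hK
  have hgraph : IsClosed {p : X × K | (p.2 : X) ≤ p.1} :=
    isClosed_le (continuous_subtype_val.comp continuous_snd) continuous_fst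
  convert isClosedMap_fst_of_compactSpace _ hgraph using 1
  ext x
  simp [coe_upperClosure]

theorem IsCompact.isClosed_lowerClosure (hK : IsCompact K) :
    IsClosed (lowerClosure K : Set X) :=
  IsCompact.isClosed_upperClosure (X := Xᵒᵈ) hK

end Topology

section StochasticOrder

variable {X : Type*} [TopologicalSpace X] [MeasurableSpace X] [Preorder X] [OrderClosedTopology X]
  {μ ν : Measure X}

theorem stochasticOrder_closed_of_open [OpensMeasurableSpace X] [IsFiniteMeasure ν]
    (hν : MeasureIsTight ν)
    (h : ∀ U : Set X, IsOpen U → IsUpperSet U → μ U ≤ ν U) :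
    ∀ A : Set X, IsClosed A → IsUpperSet A → μ A ≤ ν A := by
  intro A hA hAup
  refine ENNReal.le_of_forall_pos_le_add fun ε hε _ => ?_
  obtain ⟨K, hKA, hK, hKε⟩ := hν Aᶜ hA.measurableSet.compl ε (by exact_mod_cast hε)
  set L : Set X := (lowerClosure K : Set X)
  have hL : IsClosed L := hK.isClosed_lowerClosure
  have hLA : L ⊆ Aᶜ := lowerClosure_min hKA hAup.compl
  have hrest : ν (Aᶜ \ L) ≤ ε :=
    calc ν (Aᶜ \ L) = ν Aᶜ - ν L :=
          measure_sdiff hLA hL.measurableSet.nullMeasurableSet (measure_ne_top ν L)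
      _ ≤ ν Aᶜ - ν K := tsub_le_tsub_left (measure_mono subset_lowerClosure) _
      _ ≤ ε := tsub_le_iff_left.mpr hKε.le
  calc μ A ≤ μ Lᶜ := measure_mono (Set.subset_compl_comm.mp hLA)
    _ ≤ ν Lᶜ := h Lᶜ hL.isOpen_compl (lowerClosure K).lower.compl
    _ ≤ ν (A ∪ (Aᶜ \ L)) := measure_mono fun x hx => (em (x ∈ A)).imp id fun hxA => ⟨hxA, hx⟩
    _ ≤ ν A + ε := (measure_union_le _ _).trans (by gcongr)

theorem stochasticOrder_borel_of_closed (hμ : MeasureIsTight μ)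
    (h : ∀ A : Set X, IsClosed A → IsUpperSet A → μ A ≤ ν A) :
    ∀ B : Set X, MeasurableSet B → IsUpperSet B → μ B ≤ ν B := by
  intro B hB hBup
  refine ENNReal.le_of_forall_pos_le_add fun ε hε _ => ?_
  obtain ⟨K, hKB, hK, hKε⟩ := hμ B hB ε (by exact_mod_cast hε)
  set C : Set X := (upperClosure K : Set X)
  calc μ B ≤ μ K + ε := hKε.le
    _ ≤ μ C + ε := by gcongr; exact subset_upperClosure
    _ ≤ ν C + ε := add_le_add_left (h C hK.isClosed_upperClosure (upperClosure K).upper) ε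
    _ ≤ ν B + ε := by gcongr; exact upperClosure_min hKB hBup

end StochasticOrder

theorem stochasticOrder_open_iff_closed_iff_borel_general {X : Type*} [MetricSpace X]
    [MeasurableSpace X] [BorelSpace X] [PartialOrder X]
    (hclosed : IsClosed {p : X × X | p.1 ≤ p.2})
    (μ ν : Measure X) [IsProbabilityMeasure ν]
    (hμ : MeasureIsTight μ) (hν : MeasureIsTight ν) :
    ((∀ U : Set X, IsOpen U → IsUpperSet U → μ U ≤ ν U) ↔
        (∀ A : Set X, IsClosed A → IsUpperSet A → μ A ≤ ν A)) ∧
      ((∀ U : Set X, IsOpen U → IsUpperSet U → μ U ≤ ν U) ↔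
        (∀ B : Set X, MeasurableSet B → IsUpperSet B → μ B ≤ ν B)) := by
  have : OrderClosedTopology X := ⟨hclosed⟩
  have open_closed := stochasticOrder_closed_of_open (μ := μ) hν
  have closed_borel := stochasticOrder_borel_of_closed (ν := ν) hμ
  have borel_open : (∀ B : Set X, MeasurableSet B → IsUpperSet B → μ B ≤ ν B) →
      ∀ U : Set X, IsOpen U → IsUpperSet U → μ U ≤ ν U :=
    fun h U hU => h U hU.measurableSet
  exact ⟨⟨open_closed, fun h => borel_open (closed_borel h)⟩,
    ⟨fun h => closed_borel (open_closed h), borel_open⟩⟩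

/-- For tight Borel probability measures `μ, ν` on a metric space with a closed partial order,
the following are equivalent: (1) `μ U ≤ ν U` for every open upper set `U`;
(2) `μ A ≤ ν A` for every closed upper set `A`; (3) `μ B ≤ ν B` for every Borel upper set `B`. -/
theorem stochasticOrder_open_iff_closed_iff_borel {X : Type*} [MetricSpace X]
    [MeasurableSpace X] [BorelSpace X] [PartialOrder X]
    (hclosed : IsClosed {p : X × X | p.1 ≤ p.2})
    (μ ν : Measure X) [IsProbabilityMeasure μ] [IsProbabilityMeasure ν]
    (hμ : MeasureIsTight μ) (hν : MeasureIsTight ν) :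
    ((∀ U : Set X, IsOpen U → IsUpperSet U → μ U ≤ ν U) ↔
        (∀ A : Set X, IsClosed A → IsUpperSet A → μ A ≤ ν A)) ∧
      ((∀ U : Set X, IsOpen U → IsUpperSet U → μ U ≤ ν U) ↔
        (∀ B : Set X, MeasurableSet B → IsUpperSet B → μ B ≤ ν B)) :=
  stochasticOrder_open_iff_closed_iff_borel_general hclosed μ ν hμ hν
end

section
/- Let (X,d) be a metric space equipped with a closed partial order satisfying both: (i) for all x ≤ y and all x₁ ∈ X there exists y₁ ∈ X with x₁ ≤ y₁ and d(y,y₁) ≤ d(x,x₁); and (ii) for all x ≤ y and all y₁ ∈ X there exists x₁ ∈ X with x₁ ≤ y₁ and d(x,x₁) ≤ d(y,y₁). Then X is monotone normal: for every closed upper set A and every closed lower set B with A ∩ B = ∅ there exist an open upper set U ⊇ A and an open lower set V ⊇ B with U ∩ V = ∅; indeed U := {x : d(x,A) < d(x,B)} and V := {x : d(x,A) > d(x,B)} have these properties. -/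
/-!
Property (i) says that moving from `x` up to `y` can only bring points of an upper set `A`
closer, so `x ↦ d(x, A)` is antitone; dually (ii) makes `x ↦ d(x, B)` monotone for a lower
set `B`. Hence `{x | d(x, A) < d(x, B)}` is an upper set and `{x | d(x, B) < d(x, A)}` a lower
set. Both are open since distance functions are continuous, and they contain `A` and `B`
respectively because a point outside a nonempty closed set is at positive distance from it.
-/

open Metric Set

section

variable {X Y : Type*}

theorem isUpperSet_setOf_lt_of_antitone_of_monotone [Preorder X] [Preorder Y] {f g : X → Y}
    (hf : Antitone f) (hg : Monotone g) : IsUpperSet {x | f x < g x} :=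
  fun _ _ hxy hx => (hf hxy).trans_lt (hx.trans_le (hg hxy))

theorem isLowerSet_setOf_lt_of_monotone_of_antitone [Preorder X] [Preorder Y] {f g : X → Y}
    (hf : Monotone f) (hg : Antitone g) : IsLowerSet {x | f x < g x} :=
  fun _ _ hyx hx => (hf hyx).trans_lt (hx.trans_le (hg hyx))

variable [PseudoMetricSpace X]

theorem infDist_le_infDist_of_forall_exists_dist_le {x y : X} {s t : Set X}
    (hs : s.Nonempty) (h : ∀ a ∈ s, ∃ b ∈ t, dist y b ≤ dist x a) :
    infDist y t ≤ infDist x s := by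
  refine le_of_forall_gt fun r hr => ?_
  obtain ⟨a, has, hxa⟩ := (infDist_lt_iff hs).mp hr
  obtain ⟨b, hbt, hyb⟩ := h a has
  exact (infDist_le_dist_of_mem hbt).trans_lt (hyb.trans_lt hxa)

theorem infDist_lt_infDist_of_mem_of_notMem {x : X} {s t : Set X} (ht : IsClosed t)
    (ht' : t.Nonempty) (hxs : x ∈ s) (hxt : x ∉ t) : infDist x s < infDist x t := by
  rw [infDist_zero_of_mem hxs]
  exact (ht.notMem_iff_infDist_pos ht').mp hxt

variable [Preorder X]

theorem antitone_infDist_of_isUpperSet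
    (hX : ∀ x y x₁ : X, x ≤ y → ∃ y₁ : X, x₁ ≤ y₁ ∧ dist y y₁ ≤ dist x x₁)
    {A : Set X} (hA : IsUpperSet A) : Antitone (infDist · A) := by
  intro x y hxy
  rcases A.eq_empty_or_nonempty with rfl | hA'
  · simp only [infDist_empty, le_refl]
  refine infDist_le_infDist_of_forall_exists_dist_le hA' fun a ha => ?_
  obtain ⟨y₁, hay₁, hdist⟩ := hX x y a hxy
  exact ⟨y₁, hA hay₁ ha, hdist⟩

theorem monotone_infDist_of_isLowerSet
    (hX : ∀ x y y₁ : X, x ≤ y → ∃ x₁ : X, x₁ ≤ y₁ ∧ dist x x₁ ≤ dist y y₁)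
    {B : Set X} (hB : IsLowerSet B) : Monotone (infDist · B) := by
  intro x y hxy
  rcases B.eq_empty_or_nonempty with rfl | hB'
  · simp only [infDist_empty, le_refl]
  refine infDist_le_infDist_of_forall_exists_dist_le hB' fun b hb => ?_
  obtain ⟨x₁, hx₁b, hdist⟩ := hX x y b hxy
  exact ⟨x₁, hB hx₁b hb, hdist⟩

end

theorem monotone_normal_of_dist_property_general {X : Type*} [MetricSpace X] [PartialOrder X]
    (hprop₁ : ∀ x y x₁ : X, x ≤ y → ∃ y₁ : X, x₁ ≤ y₁ ∧ dist y y₁ ≤ dist x x₁)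
    (hprop₂ : ∀ x y y₁ : X, x ≤ y → ∃ x₁ : X, x₁ ≤ y₁ ∧ dist x x₁ ≤ dist y y₁) :
    (∀ A B : Set X, IsClosed A → IsUpperSet A → IsClosed B → IsLowerSet B → A ∩ B = ∅ →
        ∃ U V : Set X, IsOpen U ∧ IsUpperSet U ∧ A ⊆ U ∧
          IsOpen V ∧ IsLowerSet V ∧ B ⊆ V ∧ U ∩ V = ∅) ∧
      (∀ A B : Set X, A.Nonempty → B.Nonempty →
        IsClosed A → IsUpperSet A → IsClosed B → IsLowerSet B → A ∩ B = ∅ →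
        IsOpen {x : X | infDist x A < infDist x B} ∧
          IsUpperSet {x : X | infDist x A < infDist x B} ∧
          A ⊆ {x : X | infDist x A < infDist x B} ∧
          IsOpen {x : X | infDist x B < infDist x A} ∧
          IsLowerSet {x : X | infDist x B < infDist x A} ∧
          B ⊆ {x : X | infDist x B < infDist x A} ∧
          {x : X | infDist x A < infDist x B} ∩ {x : X | infDist x B < infDist x A} = ∅) := by
  refine (fun separation => ⟨fun A B hAc hAu hBc hBl hAB => ?_, separation⟩)
    fun A B hA hB hAc hAu hBc hBl hAB => ?_
  · have hfA := antitone_infDist_of_isUpperSet hprop₁ hAu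
    have hfB := monotone_infDist_of_isLowerSet hprop₂ hBl
    exact ⟨isOpen_lt (continuous_infDist_pt A) (continuous_infDist_pt B),
      isUpperSet_setOf_lt_of_antitone_of_monotone hfA hfB,
      fun a ha => infDist_lt_infDist_of_mem_of_notMem hBc hB ha fun hb => hAB.subset ⟨ha, hb⟩,
      isOpen_lt (continuous_infDist_pt B) (continuous_infDist_pt A),
      isLowerSet_setOf_lt_of_monotone_of_antitone hfB hfA,
      fun b hb => infDist_lt_infDist_of_mem_of_notMem hAc hA hb fun ha => hAB.subset ⟨ha, hb⟩,
      eq_empty_of_forall_notMem fun _ hx => lt_asymm hx.1 hx.2.out⟩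
  rcases A.eq_empty_or_nonempty with rfl | hA
  · exact ⟨∅, univ, isOpen_empty, isUpperSet_empty, subset_rfl, isOpen_univ,
      isLowerSet_univ, subset_univ B, empty_inter univ⟩
  rcases B.eq_empty_or_nonempty with rfl | hB
  · exact ⟨univ, ∅, isOpen_univ, isUpperSet_univ, subset_univ A, isOpen_empty,
      isLowerSet_empty, subset_rfl, inter_empty univ⟩
  obtain ⟨hUo, hUu, hAU, hVo, hVl, hBV, hUV⟩ := separation A B hA hB hAc hAu hBc hBl hAB
  exact ⟨_, _, hUo, hUu, hAU, hVo, hVl, hBV, hUV⟩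

/-- Let `(X,d)` be a metric space with a closed partial order satisfying: (i) for all `x ≤ y`
and all `x₁` there is `y₁ ≥ x₁` with `d(y,y₁) ≤ d(x,x₁)`; (ii) for all `x ≤ y` and all `y₁`
there is `x₁ ≤ y₁` with `d(x,x₁) ≤ d(y,y₁)`. Then `X` is monotone normal: disjoint closed
upper and lower sets are separated by disjoint open upper and lower sets; indeed for nonempty
such sets the open sets `U = {x | d(x,A) < d(x,B)}` and `V = {x | d(x,B) < d(x,A)}` work. -/
theorem monotone_normal_of_dist_property {X : Type*} [MetricSpace X] [PartialOrder X]
    (hclosed : IsClosed {p : X × X | p.1 ≤ p.2})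
    (hprop₁ : ∀ x y x₁ : X, x ≤ y → ∃ y₁ : X, x₁ ≤ y₁ ∧ dist y y₁ ≤ dist x x₁)
    (hprop₂ : ∀ x y y₁ : X, x ≤ y → ∃ x₁ : X, x₁ ≤ y₁ ∧ dist x x₁ ≤ dist y y₁) :
    (∀ A B : Set X, IsClosed A → IsUpperSet A → IsClosed B → IsLowerSet B → A ∩ B = ∅ →
        ∃ U V : Set X, IsOpen U ∧ IsUpperSet U ∧ A ⊆ U ∧
          IsOpen V ∧ IsLowerSet V ∧ B ⊆ V ∧ U ∩ V = ∅) ∧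
      (∀ A B : Set X, A.Nonempty → B.Nonempty →
        IsClosed A → IsUpperSet A → IsClosed B → IsLowerSet B → A ∩ B = ∅ →
        IsOpen {x : X | infDist x A < infDist x B} ∧
          IsUpperSet {x : X | infDist x A < infDist x B} ∧
          A ⊆ {x : X | infDist x A < infDist x B} ∧
          IsOpen {x : X | infDist x B < infDist x A} ∧
          IsLowerSet {x : X | infDist x B < infDist x A} ∧
          B ⊆ {x : X | infDist x B < infDist x A} ∧
          {x : X | infDist x A < infDist x B} ∩ {x : X | infDist x B < infDist x A} = ∅) :=
  monotone_normal_of_dist_property_general hprop₁ hprop₂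
end

section
/- Let E be a separable real Banach space and C ⊆ E a nonempty open convex cone whose closure C̄ is a proper normal cone, with the induced partial order x ≤ y iff y − x ∈ C̄. Then the σ-algebra on C generated by the collection of all open upper subsets of C (upper with respect to the order restricted to C) equals the Borel σ-algebra of C. -/
/-!
Fix `u ∈ C` with `ball u ρ ⊆ C`. Around any `y ∈ C` the half-open order interval
`{z | y - ε • u ≪ z ≤ y + ε • u}` (where `a ≪ z` means `z - a ∈ C`) is the intersection of the open upper set
`{z | y - ε • u ≪ z}` with the complement of the open upper set `{z | ¬ z ≤ y + ε • u}`, so it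
lies in the σ-algebra generated by the open upper sets. It contains the ball of radius `ε * ρ`
about `y` because `C` is open, and by normality it lies in a ball of radius `O(ε)`. So every
point has a neighbourhood basis of measurable sets, and since `C` is hereditarily Lindelöf,
every open set is a countable union of them.
-/

open Set Filter Topology Metric MeasureTheory

theorem borel_le_of_forall_exists_measurableSet_mem_nhds {X : Type*} [TopologicalSpace X]
    [HereditarilyLindelofSpace X] {m : MeasurableSpace X}
    (h : ∀ x, ∀ s ∈ 𝓝 x, ∃ t ∈ 𝓝 x, MeasurableSet[m] t ∧ t ⊆ s) : borel X ≤ m := by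
  refine MeasurableSpace.generateFrom_le fun G hG => ?_
  choose! N hN_nhds hN_meas hN_sub using fun x (hx : x ∈ G) => h x G (hG.mem_nhds hx)
  obtain ⟨T, hT, hTG⟩ :=
    eq_open_union_countable (fun x : G => interior (N x)) fun _ => isOpen_interior
  have hG_eq : G = ⋃ x ∈ T, N x := by
    refine Subset.antisymm (fun x hx => ?_) (iUnion₂_subset fun x _ => hN_sub x x.2)
    have hx' : x ∈ ⋃ x ∈ T, interior (N x) :=
      hTG ▸ mem_iUnion.2 ⟨⟨x, hx⟩, mem_interior_iff_mem_nhds.2 (hN_nhds x hx)⟩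
    exact biUnion_mono subset_rfl (fun _ _ => interior_subset) hx'
  rw [hG_eq]
  exact MeasurableSet.biUnion hT fun x _ => hN_meas x x.2

namespace ConvexCone

section Topological

variable {𝕜 E : Type*} [Semiring 𝕜] [PartialOrder 𝕜] [AddCommGroup E] [TopologicalSpace E]
  [SMul 𝕜 E] {K : ConvexCone 𝕜 E}

variable (K) in
def IsOpenUpper (V : Set E) : Prop :=
  IsOpen V ∧ ∀ x y, x ∈ V → y - x ∈ closure (K : Set E) → y ∈ V

theorem IsOpenUpper.preimage_val {V : Set E} (hV : K.IsOpenUpper V) (s : Set E) :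
    IsOpen (Subtype.val ⁻¹' V : Set s) ∧
      ∀ x y : s, x ∈ Subtype.val ⁻¹' V → (y : E) - x ∈ closure (K : Set E) →
        y ∈ Subtype.val ⁻¹' V :=
  ⟨hV.1.preimage continuous_subtype_val, fun x y => hV.2 x y⟩

variable (K) in
/-- The interval `(l, h]`, where `l < z` means `z - l ∈ K` (the interior of the order cone)
and `z ≤ h` means `h - z ∈ closure K`. -/
def Ioc (l h : E) : Set E :=
  {z | z - l ∈ K ∧ h - z ∈ closure (K : Set E)}

theorem Ioc_eq_inter_compl (l h : E) :
    K.Ioc l h = {z | z - l ∈ K} ∩ {z | h - z ∉ closure (K : Set E)}ᶜ := by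
  ext z
  simp [Ioc]

variable [IsTopologicalAddGroup E]

open Pointwise in
theorem add_mem_of_mem_closure (hK : IsOpen (K : Set E)) {x y : E} (hx : x ∈ K)
    (hy : y ∈ closure (K : Set E)) : x + y ∈ K := by
  have hxy : x + y ∈ (K : Set E) + closure (K : Set E) := add_mem_add hx hy
  rw [hK.add_closure] at hxy
  obtain ⟨a, ha, b, hb, hab⟩ := hxy
  exact hab ▸ K.add_mem ha hb

theorem add_mem_closure {x y : E} (hx : x ∈ closure (K : Set E))
    (hy : y ∈ closure (K : Set E)) : x + y ∈ closure (K : Set E) :=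
  map_mem_closure₂ continuous_add hx hy fun _ ha _ hb => K.add_mem ha hb

theorem isOpenUpper_setOf_sub_mem (hK : IsOpen (K : Set E)) (l : E) :
    K.IsOpenUpper {z | z - l ∈ K} := by
  refine ⟨hK.preimage (continuous_sub_right l), fun x y hx hxy => ?_⟩
  have h := add_mem_of_mem_closure hK hx hxy
  rwa [sub_add_sub_cancel'] at h

theorem isOpenUpper_setOf_sub_notMem_closure (h : E) :
    K.IsOpenUpper {z | h - z ∉ closure (K : Set E)} := by
  refine ⟨isClosed_closure.isOpen_compl.preimage (continuous_sub_left h), fun x y hx hxy hy => ?_⟩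
  have h' := add_mem_closure hy hxy
  rw [sub_add_sub_cancel] at h'
  exact hx h'

end Topological

section Normed

variable {E : Type*} [NormedAddCommGroup E] [NormedSpace ℝ E] {K : ConvexCone ℝ E}
  {u : E} {ρ ε : ℝ}

open Pointwise in
theorem ball_smul_subset (hu : ball u ρ ⊆ K) (hε : 0 < ε) : ball (ε • u) (ε * ρ) ⊆ K := by
  have hball : ball (ε • u) (ε * ρ) = ε • ball u ρ := by
    rw [_root_.smul_ball hε.ne', Real.norm_of_nonneg hε.le]
  rw [hball]
  rintro _ ⟨w, hw, rfl⟩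
  exact K.smul_mem hε (hu hw)

theorem ball_subset_Ioc (hu : ball u ρ ⊆ K) (hε : 0 < ε) (y : E) :
    ball y (ε * ρ) ⊆ K.Ioc (y - ε • u) (y + ε • u) := by
  intro z hz
  have hz' : ‖z - y‖ < ε * ρ := mem_ball_iff_norm.1 hz
  have hsub := ball_smul_subset hu hε
  refine ⟨hsub ?_, subset_closure (hsub ?_)⟩
  · rwa [mem_ball_iff_norm, show z - (y - ε • u) - ε • u = z - y by abel]
  · rwa [mem_ball_iff_norm, show y + ε • u - z - ε • u = -(z - y) by abel, norm_neg]

theorem Ioc_subset_closedBall {c : ℝ}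
    (hc : ∀ x y, x ∈ closure (K : Set E) → y - x ∈ closure (K : Set E) → ‖x‖ ≤ c * ‖y‖)
    (hε : 0 ≤ ε) (y u : E) :
    K.Ioc (y - ε • u) (y + ε • u) ⊆ closedBall y ((2 * c + 1) * ‖u‖ * ε) := by
  rintro z ⟨hlow, hup⟩
  have hbound : ‖z - (y - ε • u)‖ ≤ c * ‖(2 * ε) • u‖ :=
    hc _ _ (subset_closure hlow) (by convert hup using 1; rw [two_mul, add_smul]; abel)
  rw [norm_smul, Real.norm_of_nonneg (by positivity)] at hbound
  rw [mem_closedBall_iff_norm]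
  calc ‖z - y‖ = ‖(z - (y - ε • u)) - ε • u‖ := by congr 1; abel
    _ ≤ ‖z - (y - ε • u)‖ + ‖ε • u‖ := norm_sub_le _ _
    _ ≤ c * (2 * ε * ‖u‖) + ε * ‖u‖ := by
      rw [norm_smul, Real.norm_of_nonneg hε]; gcongr
    _ = (2 * c + 1) * ‖u‖ * ε := by ring

end Normed

end ConvexCone

theorem generateFrom_openUpperSets_eq_borel_general {E : Type*} [NormedAddCommGroup E]
    [NormedSpace ℝ E] [TopologicalSpace.SeparableSpace E]
    (C : Set E) (hCne : C.Nonempty) (hCopen : IsOpen C)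
    (hadd : ∀ x ∈ C, ∀ y ∈ C, x + y ∈ C)
    (hsmul : ∀ t : ℝ, 0 < t → ∀ x ∈ C, t • x ∈ C)
    (hnormal : ∃ K : ℝ, ∀ x y : E, x ∈ closure C → y - x ∈ closure C → ‖x‖ ≤ K * ‖y‖) :
    MeasurableSpace.generateFrom
        {U : Set C | IsOpen U ∧
          ∀ x y : C, x ∈ U → (y : E) - (x : E) ∈ closure C → y ∈ U} =
      borel C := by
  let K : ConvexCone ℝ E := ⟨C, fun t ht x hx => hsmul t ht x hx, fun x hx y hy => hadd x hx y hy⟩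
  obtain ⟨u, hu⟩ := hCne
  obtain ⟨ρ, hρ, hball⟩ := isOpen_iff.mp hCopen u hu
  obtain ⟨c, hc⟩ := hnormal
  refine le_antisymm
    (MeasurableSpace.generateFrom_le fun U hU => MeasurableSpace.measurableSet_generateFrom hU.1) ?_
  refine borel_le_of_forall_exists_measurableSet_mem_nhds fun y s hs => ?_
  obtain ⟨r, hr, hrs⟩ := Metric.mem_nhds_iff.mp hs
  obtain ⟨ε, hε, hεr⟩ := exists_pos_mul_lt hr ((2 * c + 1) * ‖u‖)
  refine ⟨Subtype.val ⁻¹' K.Ioc (y - ε • u) (y + ε • u), ?_, ?_, ?_⟩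
  · exact mem_of_superset (ball_mem_nhds y (mul_pos hε hρ))
      fun z hz => K.ball_subset_Ioc hball hε y hz
  · rw [K.Ioc_eq_inter_compl, preimage_inter, preimage_compl]
    exact (MeasurableSpace.measurableSet_generateFrom
      ((K.isOpenUpper_setOf_sub_mem hCopen _).preimage_val C)).inter
      (MeasurableSpace.measurableSet_generateFrom
        ((K.isOpenUpper_setOf_sub_notMem_closure _).preimage_val C)).compl
  · exact fun z hz => hrs ((K.Ioc_subset_closedBall hc hε.le y u hz).trans_lt hεr)

/-- Let `E` be a separable real Banach space and `C` a nonempty open convex cone whose closure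
is a proper normal cone, inducing the order `x ≤ y ↔ y - x ∈ closure C`. Then the σ-algebra
on `C` generated by the open upper subsets of `C` is the Borel σ-algebra of `C`. -/
theorem generateFrom_openUpperSets_eq_borel {E : Type*} [NormedAddCommGroup E]
    [NormedSpace ℝ E] [CompleteSpace E] [TopologicalSpace.SeparableSpace E]
    (C : Set E) (hCne : C.Nonempty) (hCopen : IsOpen C)
    (hadd : ∀ x ∈ C, ∀ y ∈ C, x + y ∈ C)
    (hsmul : ∀ t : ℝ, 0 < t → ∀ x ∈ C, t • x ∈ C)
    (hproper : closure C ∩ (-(closure C)) = {0})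
    (hnormal : ∃ K : ℝ, ∀ x y : E, x ∈ closure C → y - x ∈ closure C → ‖x‖ ≤ K * ‖y‖) :
    MeasurableSpace.generateFrom
        {U : Set C | IsOpen U ∧
          ∀ x y : C, x ∈ U → (y : E) - (x : E) ∈ closure C → y ∈ U} =
      borel C :=
  generateFrom_openUpperSets_eq_borel_general C hCne hCopen hadd hsmul hnormal
end

section
/- Let E be a real Banach space and C ⊆ E a nonempty open convex cone whose closure C̄ is a proper normal cone, with the induced partial order x ≤ y iff y − x ∈ C̄. If μ and ν are tight Borel probability measures on C such that μ(U) ≤ ν(U) and ν(U) ≤ μ(U) for every open upper subset U of C, then μ = ν. Consequently the stochastic order on the tight Borel probability measures on C is a partial order. -/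
/-!
Open upper sets are closed under finite intersections, so `μ` and `ν` agree on the σ-algebra
they generate. By tightness both measures live on a σ-compact set `T`. Fixing `e ∈ C`, the sets
`{x | x - z ∈ C}` are open upper sets, and since the cone is proper, those with
`z = d - (n + 1)⁻¹ • e`, `d` ranging over a countable dense subset of `T`, separate the points of
`T`. By the Lusin–Souslin theorem, applied on each compact piece of `T`, a countable family of
measurable sets separating the points of `T` generates, up to intersecting with `T`, every Borel
set; hence `μ` and `ν` agree on all Borel sets.
-/

open MeasureTheory Set TopologicalSpace Filter Topology
open scoped ENNReal

lemma IsSigmaCompact.union {X : Type*} [TopologicalSpace X] {s t : Set X}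
    (hs : IsSigmaCompact s) (ht : IsSigmaCompact t) : IsSigmaCompact (s ∪ t) := by
  rw [union_eq_iUnion]
  exact isSigmaCompact_iUnion _ fun b => by cases b <;> assumption

lemma IsSigmaCompact.isSeparable {X : Type*} [TopologicalSpace X] [PseudoMetrizableSpace X]
    {s : Set X} (hs : IsSigmaCompact s) : IsSeparable s := by
  obtain ⟨K, hK, rfl⟩ := hs
  exact isSeparable_iUnion.2 fun n => (hK n).isSeparable

lemma MeasureIsTight.exists_isSigmaCompact_compl_null {X : Type*} [TopologicalSpace X]
    [T2Space X] [MeasurableSpace X] [OpensMeasurableSpace X] {μ : Measure X} [IsFiniteMeasure μ]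
    (hμ : MeasureIsTight μ) : ∃ T, IsSigmaCompact T ∧ μ Tᶜ = 0 := by
  choose K _ hK hμK using fun n : ℕ =>
    hμ univ MeasurableSet.univ (n : ℝ≥0∞)⁻¹ (ENNReal.inv_pos.2 (ENNReal.natCast_ne_top n))
  refine ⟨⋃ n, K n, isSigmaCompact_iUnion_of_isCompact K hK, nonpos_iff_eq_zero.1 ?_⟩
  refine ge_of_tendsto' ENNReal.tendsto_inv_nat_nhds_zero fun n => ?_
  have hcompl : μ (K n)ᶜ < (n : ℝ≥0∞)⁻¹ := by
    rw [measure_compl (hK n).measurableSet (measure_ne_top μ _)]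
    exact ENNReal.sub_lt_of_lt_add (measure_mono (subset_univ _)) (add_comm (μ (K n)) _ ▸ hμK n)
  exact (measure_mono (compl_subset_compl.2 (subset_iUnion K n))).trans hcompl.le

lemma measure_eq_of_measurableSet_generateFrom {X : Type*} [MeasurableSpace X]
    {μ ν : Measure X} [IsFiniteMeasure μ] {S : Set (Set X)} (hS : IsPiSystem S)
    (hSm : ∀ s ∈ S, MeasurableSet s) (hμν : ∀ s ∈ S, μ s = ν s) (huniv : μ univ = ν univ)
    {s : Set X} (hs : MeasurableSet[MeasurableSpace.generateFrom S] s) : μ s = ν s := by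
  have hle := MeasurableSpace.generateFrom_le hSm
  have htrim : μ.trim hle = ν.trim hle := by
    refine ext_of_generate_finite S rfl hS (fun t ht => ?_) ?_
    · rw [trim_measurableSet_eq hle (MeasurableSpace.measurableSet_generateFrom ht),
        trim_measurableSet_eq hle (MeasurableSpace.measurableSet_generateFrom ht), hμν t ht]
    · rw [trim_measurableSet_eq hle .univ, trim_measurableSet_eq hle .univ, huniv]
  rw [← trim_measurableSet_eq hle hs, htrim, trim_measurableSet_eq hle hs]

section LusinSouslin

variable {X : Type*} [TopologicalSpace X] [MetrizableSpace X] {m : MeasurableSpace X}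
  [MeasurableSpace X] [BorelSpace X]

lemma IsSigmaCompact.measurableSet_image_inter {Z : Type*} [MeasurableSpace Z]
    [MeasurableSpace.CountablySeparated Z] {f : X → Z} (hf : Measurable f) {T : Set X}
    (hT : IsSigmaCompact T) (hinj : InjOn f T) {A : Set X} (hA : MeasurableSet A) :
    MeasurableSet (f '' (A ∩ T)) := by
  -- with a compatible metric, each compact piece of `T` is Polish
  let := metrizableSpaceMetric X
  obtain ⟨K, hK, rfl⟩ := hT
  rw [inter_iUnion, image_iUnion]
  refine MeasurableSet.iUnion fun n => ?_
  have : CompactSpace (K n) := isCompact_iff_compactSpace.1 (hK n)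
  have himage : f '' (A ∩ K n) = (f ∘ (↑) : K n → Z) '' ((↑) ⁻¹' A) := by
    rw [image_comp, Subtype.image_preimage_coe, inter_comm]
  rw [himage]
  have hinjK : InjOn (f ∘ (↑) : K n → Z) ((↑) ⁻¹' A) :=
    (hinj.mono (subset_iUnion K n)).comp Subtype.val_injective.injOn (fun x _ => by simp)
  exact (measurable_subtype_coe hA).image_of_measurable_injOn (hf.comp measurable_subtype_coe) hinjK

lemma IsSigmaCompact.exists_measurableSet_inter_eq
    (hm : m ≤ ‹MeasurableSpace X›) {T : Set X} (hT : IsSigmaCompact T)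
    [HasCountableSeparatingOn X (MeasurableSet[m]) T] {A : Set X} (hA : MeasurableSet A) :
    ∃ B, MeasurableSet[m] B ∧ B ∩ T = A ∩ T := by
  classical
  obtain ⟨S, hSc, hSm, hsep⟩ := exists_countable_separating X (MeasurableSet[m]) T
  have : Countable S := hSc.to_subtype
  let f : X → S → Bool := fun x s => decide (x ∈ (s : Set X))
  have hf : Measurable[m] f := @measurable_pi_lambda _ _ _ m _ f fun s =>
    measurable_to_bool (by simpa [f, preimage] using hSm s s.2)
  have hinj : InjOn f T := fun x hx y hy hxy =>
    hsep x hx y hy fun s hs => by simpa [f] using congrFun hxy ⟨s, hs⟩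
  refine ⟨f ⁻¹' (f '' (A ∩ T)), hf (hT.measurableSet_image_inter (hf.mono hm le_rfl) hinj hA), ?_⟩
  rw [hinj.preimage_image_inter inter_subset_right]

lemma MeasureTheory.Measure.ext_of_hasCountableSeparatingOn
    (hm : m ≤ ‹MeasurableSpace X›) {μ ν : Measure X} (hμν : ∀ s, MeasurableSet[m] s → μ s = ν s)
    {T : Set X} (hT : IsSigmaCompact T) [HasCountableSeparatingOn X (MeasurableSet[m]) T]
    (hμT : μ Tᶜ = 0) (hνT : ν Tᶜ = 0) : μ = ν := by
  ext A hA
  obtain ⟨B, hBm, hBA⟩ := hT.exists_measurableSet_inter_eq hm hA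
  calc μ A = μ (B ∩ T) := by rw [hBA, measure_inter_conull hμT]
    _ = ν (B ∩ T) := by rw [measure_inter_conull hμT, measure_inter_conull hνT, hμν B hBm]
    _ = ν A := by rw [hBA, measure_inter_conull hνT]

end LusinSouslin

section Cone

variable {E : Type*} [NormedAddCommGroup E] {C : Set E}

def openUpperSets (C : Set E) : Set (Set C) :=
  {U | IsOpen U ∧ ∀ x y : C, x ∈ U → (y : E) - (x : E) ∈ closure C → y ∈ U}

lemma isPiSystem_openUpperSets (C : Set E) : IsPiSystem (openUpperSets C) := by
  rintro U ⟨hUo, hU⟩ V ⟨hVo, hV⟩ -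
  exact ⟨hUo.inter hVo, fun x y hx hxy => ⟨hU x y hx.1 hxy, hV x y hx.2 hxy⟩⟩

lemma add_mem_of_mem_of_mem_closure (hCopen : IsOpen C) (hadd : ∀ x ∈ C, ∀ y ∈ C, x + y ∈ C)
    {c v : E} (hc : c ∈ C) (hv : v ∈ closure C) : c + v ∈ C := by
  obtain ⟨b, hb, hbC⟩ := mem_closure_iff.1 hv {x | c + v - x ∈ C}
    (hCopen.preimage (continuous_const.sub continuous_id)) (by simpa using hc)
  simpa using hadd _ hb _ hbC

def strictUpperSet (C : Set E) (z : E) : Set C := {x | (x : E) - z ∈ C}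

lemma strictUpperSet_mem_openUpperSets (hCopen : IsOpen C)
    (hadd : ∀ x ∈ C, ∀ y ∈ C, x + y ∈ C) (z : E) : strictUpperSet C z ∈ openUpperSets C := by
  refine ⟨hCopen.preimage (continuous_subtype_val.sub continuous_const), fun x y hx hxy => ?_⟩
  simpa [strictUpperSet] using add_mem_of_mem_of_mem_closure hCopen hadd hx hxy

variable [NormedSpace ℝ E]

lemma exists_sub_mem_and_sub_notMem (hCopen : IsOpen C)
    (hsmul : ∀ t : ℝ, 0 < t → ∀ x ∈ C, t • x ∈ C) {e : E} (he : e ∈ C) {D : Set E} {a b : E}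
    (ha : a ∈ closure D) (hba : b - a ∉ closure C) :
    ∃ d ∈ D, ∃ n : ℕ, a - (d - ((n : ℝ) + 1)⁻¹ • e) ∈ C ∧ b - (d - ((n : ℝ) + 1)⁻¹ • e) ∉ C := by
  -- choose `z = d - t • e` just below `a`: then `b - z` is close to `b - a`, hence outside `C`
  obtain ⟨ε, hε, hball⟩ := Metric.isOpen_iff.1 isClosed_closure.isOpen_compl _ hba
  have hsmall : Tendsto (fun n : ℕ => ((n : ℝ) + 1)⁻¹ • e) atTop (𝓝 0) := by
    simpa using (tendsto_one_div_add_atTop_nhds_zero_nat (𝕜 := ℝ)).smul_const e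
  obtain ⟨n, hn⟩ := (hsmall.eventually (Metric.ball_mem_nhds 0 hε)).exists
  set t := ((n : ℝ) + 1)⁻¹
  obtain ⟨d, hdW, hdD⟩ := mem_closure_iff.1 ha {d | a - (d - t • e) ∈ C ∩ Metric.ball 0 ε}
    ((hCopen.inter Metric.isOpen_ball).preimage (continuous_const.sub
      (continuous_id.sub continuous_const)))
    (by rw [mem_ofPred_eq, sub_sub_cancel]; exact ⟨hsmul t (by positivity) e he, hn⟩)
  refine ⟨d, hdD, n, hdW.1, fun hbC => hball ?_ (subset_closure hbC)⟩
  rw [show b - (d - t • e) = b - a + (a - (d - t • e)) by abel, add_mem_ball_iff_norm]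
  exact mem_ball_zero_iff.1 hdW.2

lemma hasCountableSeparatingOn_openUpperSets (hCne : C.Nonempty) (hCopen : IsOpen C)
    (hadd : ∀ x ∈ C, ∀ y ∈ C, x + y ∈ C) (hsmul : ∀ t : ℝ, 0 < t → ∀ x ∈ C, t • x ∈ C)
    (hproper : closure C ∩ (-(closure C)) = {0}) {T : Set C} (hT : IsSigmaCompact T) :
    HasCountableSeparatingOn C (· ∈ openUpperSets C) T := by
  obtain ⟨e, he⟩ := hCne
  obtain ⟨D, hDc, hTD⟩ := (hT.image continuous_subtype_val).isSeparable
  have : Countable D := hDc.to_subtype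
  let U : D × ℕ → Set C := fun p => strictUpperSet C (p.1 - ((p.2 : ℝ) + 1)⁻¹ • e)
  have hsep : ∀ a ∈ T, ∀ b : C, (b : E) - a ∉ closure C → ∃ p, a ∈ U p ∧ b ∉ U p := by
    intro a ha b hba
    obtain ⟨d, hd, n, had, hbd⟩ :=
      exists_sub_mem_and_sub_notMem hCopen hsmul he (hTD (mem_image_of_mem _ ha)) hba
    exact ⟨(⟨d, hd⟩, n), had, hbd⟩
  refine ⟨range U, countable_range U,
    forall_mem_range.2 fun p => strictUpperSet_mem_openUpperSets hCopen hadd _,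
    fun a ha b hb hab => ?_⟩
  by_contra hne
  have hdich : (b : E) - a ∉ closure C ∨ (a : E) - b ∉ closure C := by
    by_contra! h
    have hzero : (b : E) - a ∈ closure C ∩ (-(closure C)) := ⟨h.1, by simpa using h.2⟩
    rw [hproper] at hzero
    exact hne (Subtype.ext (sub_eq_zero.1 hzero).symm)
  rcases hdich with h | h
  · obtain ⟨p, hap, hbp⟩ := hsep a ha b h
    exact hbp ((hab _ (mem_range_self p)).1 hap)
  · obtain ⟨p, hbp, hap⟩ := hsep b hb a h
    exact hap ((hab _ (mem_range_self p)).2 hbp)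

end Cone

theorem stochasticOrder_antisymm_general {E : Type*} [NormedAddCommGroup E] [NormedSpace ℝ E]
    [MeasurableSpace E] [BorelSpace E]
    (C : Set E) (hCne : C.Nonempty) (hCopen : IsOpen C)
    (hadd : ∀ x ∈ C, ∀ y ∈ C, x + y ∈ C)
    (hsmul : ∀ t : ℝ, 0 < t → ∀ x ∈ C, t • x ∈ C)
    (hproper : closure C ∩ (-(closure C)) = {0})
    (μ ν : Measure C) [IsProbabilityMeasure μ] [IsProbabilityMeasure ν]
    (hμ : MeasureIsTight μ) (hν : MeasureIsTight ν)
    (hμν : ∀ U : Set C, IsOpen U →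
      (∀ x y : C, x ∈ U → (y : E) - (x : E) ∈ closure C → y ∈ U) → μ U ≤ ν U)
    (hνμ : ∀ U : Set C, IsOpen U →
      (∀ x y : C, x ∈ U → (y : E) - (x : E) ∈ closure C → y ∈ U) → ν U ≤ μ U) :
    μ = ν := by
  obtain ⟨Tμ, hTμ, hμT⟩ := hμ.exists_isSigmaCompact_compl_null
  obtain ⟨Tν, hTν, hνT⟩ := hν.exists_isSigmaCompact_compl_null
  have hT := hTμ.union hTν
  have hS : ∀ U ∈ openUpperSets C, MeasurableSet U := fun U hU => hU.1.measurableSet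
  have hagree : ∀ s, MeasurableSet[.generateFrom (openUpperSets C)] s → μ s = ν s :=
    fun s hs => measure_eq_of_measurableSet_generateFrom (isPiSystem_openUpperSets C) hS
      (fun U hU => le_antisymm (hμν U hU.1 hU.2) (hνμ U hU.1 hU.2)) (by simp) hs
  have hsep := hasCountableSeparatingOn_openUpperSets hCne hCopen hadd hsmul hproper hT
  have : HasCountableSeparatingOn C (MeasurableSet[.generateFrom (openUpperSets C)]) (Tμ ∪ Tν) :=
    .mono (fun U hU => MeasurableSpace.measurableSet_generateFrom hU) subset_rfl
  exact Measure.ext_of_hasCountableSeparatingOn (MeasurableSpace.generateFrom_le hS) hagree hT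
    (measure_mono_null (compl_subset_compl.2 subset_union_left) hμT)
    (measure_mono_null (compl_subset_compl.2 subset_union_right) hνT)

/-- Let `E` be a real Banach space and `C` a nonempty open convex cone whose closure is a
proper normal cone, inducing the order `x ≤ y ↔ y - x ∈ closure C`. If `μ` and `ν` are tight
Borel probability measures on `C` with `μ ≤ ν` and `ν ≤ μ` in the stochastic order (i.e.
`μ U ≤ ν U` and `ν U ≤ μ U` for every open upper subset `U` of `C`), then `μ = ν`; hence the
stochastic order on tight Borel probability measures on `C` is a partial order. -/
theorem stochasticOrder_antisymm {E : Type*} [NormedAddCommGroup E] [NormedSpace ℝ E]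
    [CompleteSpace E] [MeasurableSpace E] [BorelSpace E]
    (C : Set E) (hCne : C.Nonempty) (hCopen : IsOpen C)
    (hadd : ∀ x ∈ C, ∀ y ∈ C, x + y ∈ C)
    (hsmul : ∀ t : ℝ, 0 < t → ∀ x ∈ C, t • x ∈ C)
    (hproper : closure C ∩ (-(closure C)) = {0})
    (hnormal : ∃ K : ℝ, ∀ x y : E, x ∈ closure C → y - x ∈ closure C → ‖x‖ ≤ K * ‖y‖)
    (μ ν : Measure C) [IsProbabilityMeasure μ] [IsProbabilityMeasure ν]
    (hμ : MeasureIsTight μ) (hν : MeasureIsTight ν)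
    (hμν : ∀ U : Set C, IsOpen U →
      (∀ x y : C, x ∈ U → (y : E) - (x : E) ∈ closure C → y ∈ U) → μ U ≤ ν U)
    (hνμ : ∀ U : Set C, IsOpen U →
      (∀ x y : C, x ∈ U → (y : E) - (x : E) ∈ closure C → y ∈ U) → ν U ≤ μ U) :
    μ = ν :=
  stochasticOrder_antisymm_general C hCne hCopen hadd hsmul hproper μ ν hμ hν hμν hνμ
end

section
/- Let (X,d) be a metric space equipped with a closed partial order satisfying both: (i) for all x ≤ y and all x₁ ∈ X there exists y₁ ∈ X with x₁ ≤ y₁ and d(y,y₁) ≤ d(x,x₁); and (ii) for all x ≤ y and all y₁ ∈ X there exists x₁ ∈ X with x₁ ≤ y₁ and d(x,x₁) ≤ d(y,y₁). Suppose (μₙ) and (νₙ) are sequences of tight Borel probability measures on X converging weakly to tight Borel probability measures μ and ν respectively, and μₙ ≤ νₙ in the stochastic order for every n. Then μ ≤ ν in the stochastic order. In other words, the stochastic order is a closed subset of the product of the spaces of tight Borel probability measures with the weak topology. -/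
/-!
Fix an open upper set `U` and `δ > 0`, and let `S` be the set of points at distance at least `δ`
from `Uᶜ`. Property (i) makes thickenings of upper sets upper, and property (ii) shows that the
`δ`-thickening of the upper closure of `S` lies in the upper closure of the `δ`-thickening of `S`,
hence in `U`. So `V`, the `δ/2`-thickening of the upper closure of `S`, is an open upper set with
`S ⊆ V` and `closure V ⊆ U`, and the portmanteau theorem gives
`μ S ≤ μ V ≤ liminf μₙ V ≤ liminf νₙ V ≤ limsup νₙ (closure V) ≤ ν (closure V) ≤ ν U`.
Letting `δ → 0`, `S` exhausts `U`.
-/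

open MeasureTheory Filter Topology
open scoped ENNReal

open Metric

section OrderedMetric

variable {X : Type*} [PseudoMetricSpace X] [Preorder X]

theorem IsUpperSet.thickening_of_exists_le_dist_le
    (h : ∀ x y x₁ : X, x ≤ y → ∃ y₁ : X, x₁ ≤ y₁ ∧ dist y y₁ ≤ dist x x₁)
    {s : Set X} (hs : IsUpperSet s) (δ : ℝ) : IsUpperSet (thickening δ s) := by
  intro y y' hyy' hy
  obtain ⟨z, hz, hyz⟩ := mem_thickening_iff.1 hy
  obtain ⟨z', hzz', hdist⟩ := h y y' z hyy'
  exact mem_thickening_iff.2 ⟨z', hs hzz' hz, hdist.trans_lt hyz⟩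

theorem thickening_upperClosure_subset_of_exists_le_dist_le
    (h : ∀ x y y₁ : X, x ≤ y → ∃ x₁ : X, x₁ ≤ y₁ ∧ dist x x₁ ≤ dist y y₁)
    (δ : ℝ) (s : Set X) :
    thickening δ (upperClosure s : Set X) ⊆ upperClosure (thickening δ s) := by
  intro y hy
  obtain ⟨z, ⟨a, ha, haz⟩, hzy⟩ := mem_thickening_iff.1 hy
  obtain ⟨x, hxy, hdist⟩ := h a z y haz
  have hxa : dist x a < δ := by
    rw [dist_comm] at hzy ⊢
    exact hdist.trans_lt hzy
  exact ⟨x, mem_thickening_iff.2 ⟨a, ha, hxa⟩, hxy⟩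

theorem exists_isOpen_isUpperSet_subset_closure_subset
    (h₁ : ∀ x y x₁ : X, x ≤ y → ∃ y₁ : X, x₁ ≤ y₁ ∧ dist y y₁ ≤ dist x x₁)
    (h₂ : ∀ x y y₁ : X, x ≤ y → ∃ x₁ : X, x₁ ≤ y₁ ∧ dist x x₁ ≤ dist y y₁)
    {s U : Set X} {δ : ℝ} (hδ : 0 < δ) (hU : IsUpperSet U) (hsU : thickening δ s ⊆ U) :
    ∃ V, IsOpen V ∧ IsUpperSet V ∧ s ⊆ V ∧ closure V ⊆ U := by
  refine ⟨thickening (δ / 2) (upperClosure s), isOpen_thickening,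
    (upperClosure s).upper.thickening_of_exists_le_dist_le h₁ _,
    subset_upperClosure.trans (self_subset_thickening (half_pos hδ) _), ?_⟩
  calc closure (thickening (δ / 2) (upperClosure s : Set X))
      ⊆ cthickening (δ / 2) (upperClosure s : Set X) :=
        closure_thickening_subset_cthickening _ _
    _ ⊆ thickening δ (upperClosure s : Set X) :=
        cthickening_subset_thickening' hδ (half_lt_self hδ) _
    _ ⊆ upperClosure (thickening δ s) :=
        thickening_upperClosure_subset_of_exists_le_dist_le h₂ δ s
    _ ⊆ U := upperClosure_min hsU hU

end OrderedMetric

theorem IsOpen.measure_le_of_forall_compl_thickening_compl_le {X : Type*} [PseudoMetricSpace X]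
    [MeasurableSpace X] {μ : Measure X} {U : Set X} (hU : IsOpen U) {c : ℝ≥0∞}
    (h : ∀ δ > 0, μ (thickening δ Uᶜ)ᶜ ≤ c) : μ U ≤ c := by
  have hmono : Monotone fun n : ℕ => (thickening (1 / (n + 1 : ℝ)) Uᶜ)ᶜ := fun m n hmn =>
    Set.compl_subset_compl.2 (thickening_mono (one_div_le_one_div_of_le (by positivity)
      (by exact_mod_cast Nat.add_le_add_right hmn 1)) _)
  have hU_eq : U = ⋃ n : ℕ, (thickening (1 / (n + 1 : ℝ)) Uᶜ)ᶜ := by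
    refine subset_antisymm (fun x hx => ?_) (Set.iUnion_subset fun n => ?_)
    · obtain ⟨ε, hε, hball⟩ := Metric.isOpen_iff.1 hU x hx
      obtain ⟨n, hn⟩ := exists_nat_one_div_lt hε
      refine Set.mem_iUnion.2 ⟨n, fun hx' => ?_⟩
      obtain ⟨z, hzU, hxz⟩ := mem_thickening_iff.1 hx'
      exact hzU (hball (mem_ball'.2 (hxz.trans hn)))
    · exact Set.compl_subset_comm.1 (self_subset_thickening Nat.one_div_pos_of_nat _)
  rw [hU_eq, hmono.measure_iUnion]
  exact iSup_le fun n => h _ Nat.one_div_pos_of_nat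

namespace MeasureTheory.ProbabilityMeasure

variable {Ω : Type*} [MeasurableSpace Ω] [TopologicalSpace Ω] [OpensMeasurableSpace Ω]

theorem tendsto_of_forall_integral_tendsto {ι : Type*} {L : Filter ι}
    {μs : ι → ProbabilityMeasure Ω} {μ : ProbabilityMeasure Ω}
    (h : ∀ f : Ω → ℝ, Continuous f → (∃ M : ℝ, ∀ x, |f x| ≤ M) →
      Tendsto (fun i => ∫ x, f x ∂(μs i : Measure Ω)) L (𝓝 (∫ x, f x ∂(μ : Measure Ω)))) :
    Tendsto μs L (𝓝 μ) :=
  tendsto_iff_forall_integral_tendsto.2 fun f =>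
    h f f.continuous ⟨‖f‖, fun x => f.norm_coe_le_norm x⟩

theorem measure_le_measure_closure_of_tendsto [HasOuterApproxClosed Ω] {ι : Type*}
    {L : Filter ι} [L.NeBot] {μs νs : ι → ProbabilityMeasure Ω} {μ ν : ProbabilityMeasure Ω}
    (hμ : Tendsto μs L (𝓝 μ)) (hν : Tendsto νs L (𝓝 ν)) {G : Set Ω} (hG : IsOpen G)
    (hle : ∀ᶠ i in L, (μs i : Measure Ω) G ≤ (νs i : Measure Ω) G) :
    (μ : Measure Ω) G ≤ (ν : Measure Ω) (closure G) :=
  calc (μ : Measure Ω) G ≤ L.liminf fun i => (μs i : Measure Ω) G :=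
        le_liminf_measure_open_of_tendsto hμ hG
    _ ≤ L.liminf fun i => (νs i : Measure Ω) G := liminf_le_liminf hle
    _ ≤ L.limsup fun i => (νs i : Measure Ω) (closure G) :=
        le_trans liminf_le_limsup
          (limsup_le_limsup (.of_forall fun _ => measure_mono subset_closure))
    _ ≤ (ν : Measure Ω) (closure G) := limsup_measure_closed_le_of_tendsto hν isClosed_closure

end MeasureTheory.ProbabilityMeasure

theorem stochasticOrder_closed_under_weak_convergence_general {X : Type*} [MetricSpace X]
    [MeasurableSpace X] [BorelSpace X] [PartialOrder X]
    (hprop₁ : ∀ x y x₁ : X, x ≤ y → ∃ y₁ : X, x₁ ≤ y₁ ∧ dist y y₁ ≤ dist x x₁)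
    (hprop₂ : ∀ x y y₁ : X, x ≤ y → ∃ x₁ : X, x₁ ≤ y₁ ∧ dist x x₁ ≤ dist y y₁)
    (μs νs : ℕ → Measure X) (μ ν : Measure X)
    (hμs : ∀ n, IsProbabilityMeasure (μs n)) (hνs : ∀ n, IsProbabilityMeasure (νs n))
    [IsProbabilityMeasure μ] [IsProbabilityMeasure ν]
    (hμconv : ∀ f : X → ℝ, Continuous f → (∃ M : ℝ, ∀ x, |f x| ≤ M) →
      Tendsto (fun n => ∫ x, f x ∂(μs n)) atTop (𝓝 (∫ x, f x ∂μ)))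
    (hνconv : ∀ f : X → ℝ, Continuous f → (∃ M : ℝ, ∀ x, |f x| ≤ M) →
      Tendsto (fun n => ∫ x, f x ∂(νs n)) atTop (𝓝 (∫ x, f x ∂ν)))
    (hle : ∀ n, ∀ U : Set X, IsOpen U → IsUpperSet U → μs n U ≤ νs n U) :
    ∀ U : Set X, IsOpen U → IsUpperSet U → μ U ≤ ν U := by
  intro U hU hUup
  let P : ℕ → ProbabilityMeasure X := fun n => ⟨μs n, hμs n⟩
  let Q : ℕ → ProbabilityMeasure X := fun n => ⟨νs n, hνs n⟩
  have hPlim : Tendsto P atTop (𝓝 ⟨μ, ‹_›⟩) :=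
    ProbabilityMeasure.tendsto_of_forall_integral_tendsto hμconv
  have hQlim : Tendsto Q atTop (𝓝 ⟨ν, ‹_›⟩) :=
    ProbabilityMeasure.tendsto_of_forall_integral_tendsto hνconv
  refine hU.measure_le_of_forall_compl_thickening_compl_le fun δ hδ => ?_
  obtain ⟨V, hVopen, hVupper, hSV, hVU⟩ := exists_isOpen_isUpperSet_subset_closure_subset
    hprop₁ hprop₂ hδ hUup (by simpa only [compl_compl] using
      thickening_compl_thickening_self_subset_compl δ Uᶜ)
  calc μ (thickening δ Uᶜ)ᶜ ≤ μ V := measure_mono hSV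
    _ ≤ ν (closure V) := ProbabilityMeasure.measure_le_measure_closure_of_tendsto hPlim hQlim
        hVopen (.of_forall fun n => hle n V hVopen hVupper)
    _ ≤ ν U := measure_mono hVU

/-- Let `(X,d)` be a metric space with a closed partial order satisfying the two metric-order
compatibility properties (i) and (ii). If `(μₙ)` and `(νₙ)` are sequences of tight Borel
probability measures converging weakly to tight Borel probability measures `μ` and `ν`,
and `μₙ ≤ νₙ` in the stochastic order for all `n`, then `μ ≤ ν` in the stochastic order;
i.e. the stochastic order is closed for the weak topology. -/
theorem stochasticOrder_closed_under_weak_convergence {X : Type*} [MetricSpace X]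
    [MeasurableSpace X] [BorelSpace X] [PartialOrder X]
    (hclosed : IsClosed {p : X × X | p.1 ≤ p.2})
    (hprop₁ : ∀ x y x₁ : X, x ≤ y → ∃ y₁ : X, x₁ ≤ y₁ ∧ dist y y₁ ≤ dist x x₁)
    (hprop₂ : ∀ x y y₁ : X, x ≤ y → ∃ x₁ : X, x₁ ≤ y₁ ∧ dist x x₁ ≤ dist y y₁)
    (μs νs : ℕ → Measure X) (μ ν : Measure X)
    (hμs : ∀ n, IsProbabilityMeasure (μs n)) (hνs : ∀ n, IsProbabilityMeasure (νs n))
    [IsProbabilityMeasure μ] [IsProbabilityMeasure ν]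
    (hμst : ∀ n, MeasureIsTight (μs n)) (hνst : ∀ n, MeasureIsTight (νs n))
    (hμt : MeasureIsTight μ) (hνt : MeasureIsTight ν)
    (hμconv : ∀ f : X → ℝ, Continuous f → (∃ M : ℝ, ∀ x, |f x| ≤ M) →
      Tendsto (fun n => ∫ x, f x ∂(μs n)) atTop (𝓝 (∫ x, f x ∂μ)))
    (hνconv : ∀ f : X → ℝ, Continuous f → (∃ M : ℝ, ∀ x, |f x| ≤ M) →
      Tendsto (fun n => ∫ x, f x ∂(νs n)) atTop (𝓝 (∫ x, f x ∂ν)))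
    (hle : ∀ n, ∀ U : Set X, IsOpen U → IsUpperSet U → μs n U ≤ νs n U) :
    ∀ U : Set X, IsOpen U → IsUpperSet U → μ U ≤ ν U :=
  stochasticOrder_closed_under_weak_convergence_general hprop₁ hprop₂ μs νs μ ν hμs hνs hμconv
    hνconv hle
end

section
/- Let 𝒜 be a separable unital C*-algebra, P its set of positive invertible elements, and μ₁, …, μₙ Borel probability measures on P. Then ℋ(μ₁,…,μₙ) ≤ 𝒜(μ₁,…,μₙ) in the stochastic order on Borel probability measures on P. -/
/-! Operator convexity of `a ↦ a⁻¹` (Jensen's inequality applied to the elements `aⱼ⁻¹`) gives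
`((1/n) ∑ aⱼ⁻¹)⁻¹ ≤ (1/n) ∑ aⱼ` for positive invertible `aⱼ`. Almost every point of the product
measure has all its coordinates in `P`, so there the harmonic-mean map lies below the
arithmetic-mean map, whose value is in `P`; hence the preimage of an upper set under the first
map is almost contained in its preimage under the second. -/

open MeasureTheory

/-- The stochastic order for Borel (probability) measures concentrated on the set
`P = {a : A | 0 ≤ a ∧ IsUnit a}` of positive invertible elements: `μ ≤ ν` iff
`μ U ≤ ν U` for every subset `U` of `P` that is open in `P` and an upper set in `P`. -/
def StochasticOrderOnPosInv {A : Type*} [CStarAlgebra A] [PartialOrder A] [StarOrderedRing A]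
    [MeasurableSpace A] (μ ν : Measure A) : Prop :=
  ∀ U : Set A, U ⊆ {a : A | 0 ≤ a ∧ IsUnit a} →
    (∃ V : Set A, IsOpen V ∧ U = V ∩ {a : A | 0 ≤ a ∧ IsUnit a}) →
    (∀ x ∈ U, ∀ y : A, 0 ≤ y → IsUnit y → x ≤ y → y ∈ U) →
    μ U ≤ ν U

section

variable {A : Type*} [CStarAlgebra A] [PartialOrder A] [StarOrderedRing A]
  {ι : Type*} {s : Finset ι} {w : ι → ℝ} {a : ι → A}

theorem IsStrictlyPositive.sum_smul (hw₀ : ∀ i ∈ s, 0 ≤ w i) (hw₁ : ∑ i ∈ s, w i = 1)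
    (ha : ∀ i ∈ s, IsStrictlyPositive (a i)) : IsStrictlyPositive (∑ i ∈ s, w i • a i) :=
  (CStarAlgebra.convexOn_ringInverse (A := A)).1.sum_mem hw₀ hw₁ ha

theorem ringInverse_sum_smul_ringInverse_le_sum_smul (hw₀ : ∀ i ∈ s, 0 ≤ w i)
    (hw₁ : ∑ i ∈ s, w i = 1) (ha : ∀ i ∈ s, IsStrictlyPositive (a i)) :
    Ring.inverse (∑ i ∈ s, w i • Ring.inverse (a i)) ≤ ∑ i ∈ s, w i • a i :=
  calc Ring.inverse (∑ i ∈ s, w i • Ring.inverse (a i))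
      ≤ ∑ i ∈ s, w i • Ring.inverse (Ring.inverse (a i)) :=
        CStarAlgebra.convexOn_ringInverse.map_sum_le hw₀ hw₁ fun i hi => (ha i hi).ringInverse
    _ = ∑ i ∈ s, w i • a i :=
        Finset.sum_congr rfl fun i hi => by rw [Ring.inverse_inverse (ha i hi).isUnit]

theorem measurableSet_isStrictlyPositive [MeasurableSpace A] [OpensMeasurableSpace A] :
    MeasurableSet {a : A | IsStrictlyPositive a} :=
  measurableSet_Ici.inter Units.isOpen.measurableSet

theorem stochasticOrderOnPosInv_map_of_ae_le [MeasurableSpace A] [OpensMeasurableSpace A]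
    {X : Type*} [MeasurableSpace X] {π : Measure X} {f g : X → A} (hg : AEMeasurable g π)
    (hfg : ∀ᵐ x ∂π, f x ≤ g x ∧ IsStrictlyPositive (g x)) :
    StochasticOrderOnPosInv (π.map f) (π.map g) := by
  rintro U - ⟨V, hV, rfl⟩ hU
  have hUm : MeasurableSet (V ∩ {a : A | 0 ≤ a ∧ IsUnit a}) :=
    hV.measurableSet.inter measurableSet_isStrictlyPositive
  by_cases hf : AEMeasurable f π
  · rw [Measure.map_apply_of_aemeasurable hf hUm, Measure.map_apply_of_aemeasurable hg hUm]
    exact measure_mono_ae <| hfg.mono fun x ⟨hle, hpos⟩ hfx => hU _ hfx _ hpos.1 hpos.2 hle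
  · simp [Measure.map_of_not_aemeasurable hf]

end

/-- Let `A` be a separable unital C*-algebra with its canonical order, and
`P = {a : A | 0 ≤ a ∧ IsUnit a}` its set of positive invertible elements (on which
`Ring.inverse` is the genuine inversion `a ↦ a⁻¹`). For Borel probability measures
`μ₁, …, μₙ` on `P`, the harmonic mean `ℋ(μ₁,…,μₙ)` (push-forward of `μ₁ × ⋯ × μₙ` under
`(a₁,…,aₙ) ↦ ((1/n)∑ aⱼ⁻¹)⁻¹`) is dominated by the arithmetic mean `𝒜(μ₁,…,μₙ)`
(push-forward under `(a₁,…,aₙ) ↦ (1/n)∑ aⱼ`) in the stochastic order on measures on `P`. -/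
theorem harmonicMean_le_arithmeticMean {A : Type*} [CStarAlgebra A] [PartialOrder A]
    [StarOrderedRing A] [TopologicalSpace.SeparableSpace A] [MeasurableSpace A] [BorelSpace A]
    (n : ℕ) (hn : 0 < n) (μ : Fin n → Measure A)
    (hprob : ∀ j, IsProbabilityMeasure (μ j))
    (hconc : ∀ j, μ j {a : A | 0 ≤ a ∧ IsUnit a} = 1) :
    StochasticOrderOnPosInv
      ((Measure.pi μ).map
        (fun a : Fin n → A => Ring.inverse ((n : ℂ)⁻¹ • ∑ j, Ring.inverse (a j))))
      ((Measure.pi μ).map (fun a : Fin n → A => (n : ℂ)⁻¹ • ∑ j, a j)) := by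
  have := hprob
  have hpos : ∀ᵐ a ∂Measure.pi μ, ∀ j, IsStrictlyPositive (a j) :=
    ae_all_iff.2 fun j => Measure.tendsto_eval_ae_ae.eventually <|
      (mem_ae_iff_prob_eq_one measurableSet_isStrictlyPositive).2 (hconc j)
  have hw₀ : ∀ j ∈ (Finset.univ : Finset (Fin n)), (0 : ℝ) ≤ (n : ℝ)⁻¹ := fun _ _ => by positivity
  have hw₁ : ∑ _j : Fin n, (n : ℝ)⁻¹ = 1 := by simp [hn.ne']
  refine stochasticOrderOnPosInv_map_of_ae_le (by fun_prop : Continuous _).aemeasurable ?_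
  filter_upwards [hpos] with a ha
  simp only [inv_natCast_smul_eq ℂ ℝ, Finset.smul_sum]
  exact ⟨ringInverse_sum_smul_ringInverse_le_sum_smul hw₀ hw₁ fun j _ => ha j,
    IsStrictlyPositive.sum_smul hw₀ hw₁ fun j _ => ha j⟩
end
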